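/- Let x ∈ X_d and let A_{d,x} = {a ∈ A_d : ax = x} be the stabilizer of x in A_d, acting on the torus ℝ^d/x. Suppose that for every v ∈ ℝ^d the closure in ℝ^d/x of the A_{d,x}-orbit of v + x contains a point u + x such that the grid x + u is FL. Then x is GFL. In particular, if for every v ∈ ℝ^d this orbit closure contains a rational point (a point w + x with w in the ℚ-span of x), then x is GFL. -/

import Mathlib

/-! The function `v ↦ N(x + v)` is an infimum of continuous functions of `v`, hence upper
semicontinuous, and it is constant along `A_{d,x}`-orbits: an element of `A_d` preserves the
product of coordinates and maps `x + v` onto `x + av` because `ax = x`. If `u` is in the orbit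
closure of `v` and `N(x + nu) = 0`, then `nu` is in the orbit closure of `nv`, so upper
semicontinuity gives `N(x + nv) ≤ N(x + nu) = 0`. A rational `u` has a multiple `nu ∈ x`, and
then `0 ∈ x + nu`. -/

open scoped BigOperators

noncomputable section

/-- `SL_d(ℝ)`. -/
abbrev SLd (d : ℕ) := Matrix.SpecialLinearGroup (Fin d) ℝ

/-- The unimodular lattice `gℤ^d ⊆ ℝ^d`. -/
def latticeOf {d : ℕ} (g : SLd d) : Set (Fin d → ℝ) :=
  Set.range fun m : Fin d → ℤ => (g : Matrix (Fin d) (Fin d) ℝ).mulVec fun i => (m i : ℝ)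

/-- A unimodular lattice in `ℝ^d` is a set of the form `gℤ^d` for some `g ∈ SL_d(ℝ)`. -/
def IsUnimodularLattice {d : ℕ} (x : Set (Fin d → ℝ)) : Prop :=
  ∃ g : SLd d, x = latticeOf g

/-- The grid `x + v`. -/
def grid {d : ℕ} (x : Set (Fin d → ℝ)) (v : Fin d → ℝ) : Set (Fin d → ℝ) :=
  (fun u => u + v) '' x

/-- `N(y) = inf {|∏ i, w i| : w ∈ y}`. -/
def Ngrid {d : ℕ} (y : Set (Fin d → ℝ)) : ℝ :=
  sInf {r : ℝ | ∃ w ∈ y, r = |∏ i, w i|}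

/-- The grid `x + v` is L (Littlewood): `inf {|n|·N(x + nv) : n ∈ ℤ, n ≠ 0} = 0`. -/
def IsL {d : ℕ} (x : Set (Fin d → ℝ)) (v : Fin d → ℝ) : Prop :=
  sInf {r : ℝ | ∃ n : ℤ, n ≠ 0 ∧ r = |(n : ℝ)| * Ngrid (grid x ((n : ℝ) • v))} = 0

/-- The grid `x + v` is FL (L of finite type): `N(x + nv) = 0` for some nonzero integer `n`. -/
def IsFL {d : ℕ} (x : Set (Fin d → ℝ)) (v : Fin d → ℝ) : Prop :=
  ∃ n : ℤ, n ≠ 0 ∧ Ngrid (grid x ((n : ℝ) • v)) = 0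

/-- A lattice `x` is GL if every grid `x + v` is L. -/
def IsGL {d : ℕ} (x : Set (Fin d → ℝ)) : Prop := ∀ v : Fin d → ℝ, IsL x v

/-- A lattice `x` is GFL if every grid `x + v` is FL. -/
def IsGFL {d : ℕ} (x : Set (Fin d → ℝ)) : Prop := ∀ v : Fin d → ℝ, IsFL x v

/-- `a ∈ A_d`: a diagonal matrix with positive diagonal entries (and determinant one,
since `a ∈ SL_d(ℝ)`). -/
def IsDiag {d : ℕ} (a : SLd d) : Prop :=
  (∀ i, 0 < (a : Matrix (Fin d) (Fin d) ℝ) i i) ∧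
    ∀ i j, i ≠ j → (a : Matrix (Fin d) (Fin d) ℝ) i j = 0

/-- The preimage in `ℝ^d` of the orbit of the point `v + x` of the torus `ℝ^d/x` under the
stabilizer `A_{d,x} = {a ∈ A_d : ax = x}` (acting on `ℝ^d/x` by automorphisms); a point
`u + x` of the torus lies in the closure of this orbit iff `u` lies in the closure in `ℝ^d`
of this set. -/
def stabOrbitSat {d : ℕ} (g : SLd d) (v : Fin d → ℝ) : Set (Fin d → ℝ) :=
  {z | ∃ a : SLd d, IsDiag a ∧
      (fun w => (a : Matrix (Fin d) (Fin d) ℝ).mulVec w) '' latticeOf g = latticeOf g ∧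
      ∃ w ∈ latticeOf g, z = (a : Matrix (Fin d) (Fin d) ℝ).mulVec v + w}

theorem UpperSemicontinuous.le_of_mem_closure {α β : Type*} [TopologicalSpace α] [LinearOrder β]
    {f : α → β} (hf : UpperSemicontinuous f) {s : Set α} {c : β} (hs : ∀ z ∈ s, c ≤ f z)
    {u : α} (hu : u ∈ closure s) : c ≤ f u := by
  by_contra! h
  obtain ⟨z, hzs, hz⟩ := (mem_closure_iff_frequently.mp hu).and_eventually (hf u c h) |>.exists
  exact (hs z hzs).not_gt hz

theorem exists_zsmul_mem_of_mem_span_rat {E : Type*} [AddCommGroup E] [Module ℚ E]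
    (H : AddSubgroup E) {x : E} (hx : x ∈ Submodule.span ℚ (H : Set E)) :
    ∃ n : ℤ, n ≠ 0 ∧ n • x ∈ H := by
  obtain ⟨y, hy, ⟨n, hn⟩, rfl⟩ :=
    (IsLocalization.mem_span_iff (M := nonZeroDivisors ℤ) (S := ℚ)).mp hx
  refine ⟨n, nonZeroDivisors.ne_zero hn, ?_⟩
  rw [← smul_assoc, IsLocalization.smul_mk'_one, IsLocalization.mk'_self, one_smul]
  rwa [← Submodule.mem_toAddSubgroup, Submodule.span_int_eq] at hy

section Lattice

variable {d : ℕ}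

def latticeHom (g : SLd d) : (Fin d → ℤ) →+ (Fin d → ℝ) :=
  (Matrix.mulVecLin (g : Matrix (Fin d) (Fin d) ℝ)).toAddMonoidHom.comp
    (AddMonoidHom.compLeft (Int.castAddHom ℝ) (Fin d))

theorem coe_range_latticeHom (g : SLd d) :
    ((latticeHom g).range : Set (Fin d → ℝ)) = latticeOf g :=
  AddMonoidHom.coe_range _

theorem grid_add_of_mem (H : AddSubgroup (Fin d → ℝ)) (v : Fin d → ℝ) {w : Fin d → ℝ}
    (hw : w ∈ H) : grid (H : Set (Fin d → ℝ)) (v + w) = grid H v := by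
  ext z
  constructor
  · rintro ⟨u, hu, rfl⟩
    exact ⟨u + w, H.add_mem hu hw, by dsimp only; abel⟩
  · rintro ⟨u, hu, rfl⟩
    exact ⟨u - w, H.sub_mem hu hw, by dsimp only; abel⟩

theorem image_grid (f : (Fin d → ℝ) →+ (Fin d → ℝ)) (x : Set (Fin d → ℝ)) (v : Fin d → ℝ) :
    f '' grid x v = grid (f '' x) (f v) := by
  simp only [grid, Set.image_image, map_add]

theorem Ngrid_nonneg (y : Set (Fin d → ℝ)) : 0 ≤ Ngrid y :=
  Real.sInf_nonneg fun _ ⟨_, _, hr⟩ => hr ▸ abs_nonneg _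

theorem Ngrid_image_of_prod_eq (f : (Fin d → ℝ) → Fin d → ℝ)
    (hf : ∀ w, ∏ i, f w i = ∏ i, w i) (y : Set (Fin d → ℝ)) : Ngrid (f '' y) = Ngrid y := by
  simp only [Ngrid, Set.exists_mem_image, hf]

theorem Ngrid_grid_eq_iInf (x : Set (Fin d → ℝ)) (v : Fin d → ℝ) :
    Ngrid (grid x v) = ⨅ w : x, |∏ i, ((w : Fin d → ℝ) + v) i| := by
  simp only [Ngrid, grid, Set.exists_mem_image, iInf]
  congr 1
  ext r
  simp [eq_comm]

theorem upperSemicontinuous_Ngrid_grid (x : Set (Fin d → ℝ)) :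
    UpperSemicontinuous fun v => Ngrid (grid x v) := by
  simp only [Ngrid_grid_eq_iInf]
  refine upperSemicontinuous_ciInf (fun _ => ⟨0, ?_⟩) fun _ => Continuous.upperSemicontinuous ?_
  · rintro _ ⟨_, rfl⟩
    exact abs_nonneg _
  · fun_prop

theorem prod_mulVec_of_isDiag {a : SLd d} (ha : IsDiag a) (w : Fin d → ℝ) :
    ∏ i, (a : Matrix (Fin d) (Fin d) ℝ).mulVec w i = ∏ i, w i := by
  set A := (a : Matrix (Fin d) (Fin d) ℝ)
  have hdiag : A = Matrix.diagonal A.diag :=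
    (Matrix.IsDiag.diagonal_diag fun i j hij => ha.2 i j hij).symm
  have hdet : ∏ i, A.diag i = 1 := by
    rw [← Matrix.det_diagonal, ← hdiag]
    exact a.2
  rw [hdiag]
  simp only [Matrix.mulVec_diagonal, Finset.prod_mul_distrib, hdet, one_mul]

theorem Ngrid_grid_eq_of_mem_stabOrbitSat {g : SLd d} {v z : Fin d → ℝ}
    (hz : z ∈ stabOrbitSat g v) :
    Ngrid (grid (latticeOf g) z) = Ngrid (grid (latticeOf g) v) := by
  obtain ⟨a, ha, hstab, w, hw, rfl⟩ := hz
  set f := (Matrix.mulVecLin (a : Matrix (Fin d) (Fin d) ℝ)).toAddMonoidHom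
  have hf : f '' latticeOf g = latticeOf g := hstab
  calc Ngrid (grid (latticeOf g) (f v + w))
      = Ngrid (grid (latticeOf g) (f v)) := by
        rw [← coe_range_latticeHom] at hw ⊢
        rw [grid_add_of_mem _ _ hw]
    _ = Ngrid (f '' grid (latticeOf g) v) := by rw [image_grid, hf]
    _ = Ngrid (grid (latticeOf g) v) := Ngrid_image_of_prod_eq _ (prod_mulVec_of_isDiag ha) _

theorem smul_mem_stabOrbitSat {g : SLd d} (n : ℤ) {v z : Fin d → ℝ}
    (hz : z ∈ stabOrbitSat g v) : (n : ℝ) • z ∈ stabOrbitSat g ((n : ℝ) • v) := by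
  obtain ⟨a, ha, hstab, w, hw, rfl⟩ := hz
  rw [← coe_range_latticeHom] at hw
  refine ⟨a, ha, hstab, (n : ℝ) • w, ?_, by rw [smul_add, Matrix.mulVec_smul]⟩
  rw [← coe_range_latticeHom, Int.cast_smul_eq_zsmul]
  exact AddSubgroup.zsmul_mem _ hw n

theorem isFL_of_mem_closure_stabOrbitSat {g : SLd d} {v u : Fin d → ℝ}
    (hu : u ∈ closure (stabOrbitSat g v)) (hFL : IsFL (latticeOf g) u) :
    IsFL (latticeOf g) v := by
  obtain ⟨n, hn, hN⟩ := hFL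
  refine ⟨n, hn, le_antisymm ?_ (Ngrid_nonneg _)⟩
  have hnu : (n : ℝ) • u ∈ closure (stabOrbitSat g ((n : ℝ) • v)) :=
    map_mem_closure (continuous_const_smul _) hu fun _ hz => smul_mem_stabOrbitSat n hz
  rw [← hN]
  exact (upperSemicontinuous_Ngrid_grid _).le_of_mem_closure
    (fun z hz => (Ngrid_grid_eq_of_mem_stabOrbitSat hz).ge) hnu

theorem isFL_of_zsmul_mem (hd : 0 < d) (H : AddSubgroup (Fin d → ℝ)) {u : Fin d → ℝ} {n : ℤ}
    (hn : n ≠ 0) (hu : n • u ∈ H) : IsFL (H : Set (Fin d → ℝ)) u := by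
  refine ⟨n, hn, le_antisymm ?_ (Ngrid_nonneg _)⟩
  have h0 : (0 : Fin d → ℝ) ∈ grid (H : Set (Fin d → ℝ)) ((n : ℝ) • u) :=
    ⟨-(n • u), neg_mem hu, by rw [Int.cast_smul_eq_zsmul]; exact neg_add_cancel _⟩
  refine csInf_le ⟨0, fun _ ⟨_, _, hr⟩ => hr ▸ abs_nonneg _⟩ ⟨0, h0, ?_⟩
  rw [Finset.prod_eq_zero (Finset.mem_univ ⟨0, hd⟩) rfl, abs_zero]

end Lattice

/-- If for every `v ∈ ℝ^d` the closure in the torus `ℝ^d/x` of the `A_{d,x}`-orbit of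
`v + x` contains a point `u + x` with `x + u` FL, then `x` is GFL. In particular, if every
such orbit closure contains a rational point (a point `u + x` with `u` in the ℚ-span of
`x`), then `x` is GFL. -/
theorem stmt_13 (d : ℕ) (hd : 2 ≤ d) (g : SLd d) :
    ((∀ v : Fin d → ℝ, ∃ u : Fin d → ℝ,
        u ∈ closure (stabOrbitSat g v) ∧ IsFL (latticeOf g) u) →
      IsGFL (latticeOf g)) ∧
    ((∀ v : Fin d → ℝ, ∃ u : Fin d → ℝ,
        u ∈ closure (stabOrbitSat g v) ∧ u ∈ Submodule.span ℚ (latticeOf g)) →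
      IsGFL (latticeOf g)) := by
  refine ⟨fun h v => ?_, fun h v => ?_⟩
  · obtain ⟨u, hu, hFL⟩ := h v
    exact isFL_of_mem_closure_stabOrbitSat hu hFL
  · obtain ⟨u, hu, hspan⟩ := h v
    refine isFL_of_mem_closure_stabOrbitSat hu ?_
    rw [← coe_range_latticeHom] at hspan ⊢
    obtain ⟨n, hn, hnu⟩ := exists_zsmul_mem_of_mem_span_rat _ hspan
    exact isFL_of_zsmul_mem (by omega) _ hn hnu

end
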